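/- arXiv:2405.16212 — 3 statements merged into one kernel-verified Lean document; each statement's English description precedes it below -/
import Mathlib

section
/- Let X be a pre-Hilbert module over a C*-algebra A and φ a positive linear functional on A. If n ≥ 2 and x₁,…,xₙ, z ∈ X satisfy φ(|z|²)=1, then for every nonzero complex number α: |∏_{i=1}^{n} φ(⟨x_i,z⟩)| ≤ (1/|α|)·( max{1,|α−1|}·∏_{i=1}^{n} √(φ(|x_i|²)) + |φ(⟨x₁,x₂⟩)·∏_{i=3}^{n} φ(⟨x_i,z⟩)| ). -/
open scoped ComplexOrder

/-- The Mathlib (December 2024) notion of a pre-Hilbert `C*`-module: a *right* module, with the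
action given by `SMul Aᵐᵒᵖ E`. Mathlib's current `CStarModule` is a left-module notion. -/
class CStarModuleRight (A E : Type*) [NonUnitalSemiring A] [StarRing A] [Module ℂ A]
    [AddCommGroup E] [Module ℂ E] [PartialOrder A] [SMul Aᵐᵒᵖ E] [Norm A] [Norm E]
    extends Inner A E where
  inner_add_right {x} {y} {z} : inner x (y + z) = inner x y + inner x z
  inner_self_nonneg {x} : 0 ≤ inner x x
  inner_self {x} : inner x x = 0 ↔ x = 0
  inner_op_smul_right {a : A} {x y : E} : inner x (MulOpposite.op a • y) = inner x y * a
  inner_smul_right_complex {z : ℂ} {x} {y} : inner x (z • y) = z • inner x y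
  star_inner x y : star (inner x y) = inner y x
  norm_eq_sqrt_norm_inner_self x : ‖x‖ = √‖inner x x‖

/-!
A positive functional `φ` turns `φ ⟨x, y⟩` into a semi-inner product on `X`, so the inequality is
one about a complex pre-Hilbert space with a unit vector `z`. There, if `p = ⟪z, y⟫ z` is the
projection of `y` on `z`, the vector `α p - y = (α - 1) p - (y - p)` is a combination of
orthogonal vectors, so `‖α p - y‖ ≤ max 1 |α - 1| ‖y‖`. Pairing it with `x` gives
`|α ⟪x, z⟫ ⟪z, y⟫| ≤ max 1 |α - 1| ‖x‖ ‖y‖ + |⟪x, y⟫|` (Buzano's inequality is `α = 2`), and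
multiplying by the remaining factors `⟪x_i, z⟫`, bounded by Cauchy–Schwarz, gives the product form.
-/

open scoped InnerProductSpace
open Finset

theorem Finset.prod_Icc_one_eq_mul_mul_prod_Icc_three {M : Type*} [CommMonoid M] (f : ℕ → M)
    {n : ℕ} (hn : 2 ≤ n) : ∏ i ∈ Icc 1 n, f i = f 1 * (f 2 * ∏ i ∈ Icc 3 n, f i) := by
  rw [Icc_eq_cons_Ioc (by omega), prod_cons, ← Icc_add_one_left_eq_Ioc,
    Icc_eq_cons_Ioc (by omega), prod_cons, ← Icc_add_one_left_eq_Ioc]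
  rfl

section InnerProductSpace

variable {𝕜 E : Type*} [RCLike 𝕜] [SeminormedAddCommGroup E] [InnerProductSpace 𝕜 E]

theorem norm_smul_add_smul_le_of_inner_eq_zero {p q : E} (h : ⟪p, q⟫_𝕜 = 0) (a b : 𝕜) :
    ‖a • p + b • q‖ ≤ max ‖a‖ ‖b‖ * ‖p + q‖ := by
  have hab : ⟪a • p, b • q⟫_𝕜 = 0 := by simp [inner_smul_left, inner_smul_right, h]
  rw [← pow_le_pow_iff_left₀ (norm_nonneg _) (by positivity) two_ne_zero, mul_pow,
    norm_add_sq (𝕜 := 𝕜), norm_add_sq (𝕜 := 𝕜), hab, h, norm_smul, norm_smul]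
  simp only [map_zero, mul_zero, add_zero, mul_pow, mul_add]
  gcongr
  · exact le_max_left _ _
  · exact le_max_right _ _

theorem norm_mul_inner_mul_inner_le {z : E} (hz : ‖z‖ = 1) (α : 𝕜) (x y : E) :
    ‖α * ⟪x, z⟫_𝕜 * ⟪z, y⟫_𝕜‖ ≤ max 1 ‖α - 1‖ * (‖x‖ * ‖y‖) + ‖⟪x, y⟫_𝕜‖ := by
  set p := ⟪z, y⟫_𝕜 • z
  have hp : ⟪p, y - p⟫_𝕜 = 0 := by
    have hzz : ⟪z, z⟫_𝕜 = 1 := by simp [inner_self_eq_norm_sq_to_K, hz]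
    simp only [p, inner_sub_right, inner_smul_left, inner_smul_right, hzz, mul_one]
    ring
  have hu : ‖α • p - y‖ ≤ max 1 ‖α - 1‖ * ‖y‖ := by
    have h := norm_smul_add_smul_le_of_inner_eq_zero hp (α - 1) (-1)
    rw [max_comm] at h
    convert h using 2 <;> simp [sub_smul]
  have hsplit : α * ⟪x, z⟫_𝕜 * ⟪z, y⟫_𝕜 = ⟪x, α • p - y⟫_𝕜 + ⟪x, y⟫_𝕜 := by
    simp only [p, inner_sub_right, inner_smul_right]
    ring
  calc ‖α * ⟪x, z⟫_𝕜 * ⟪z, y⟫_𝕜‖ ≤ ‖x‖ * ‖α • p - y‖ + ‖⟪x, y⟫_𝕜‖ := by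
        rw [hsplit]
        exact (norm_add_le _ _).trans (by gcongr; exact norm_inner_le_norm _ _)
    _ ≤ ‖x‖ * (max 1 ‖α - 1‖ * ‖y‖) + ‖⟪x, y⟫_𝕜‖ := by gcongr
    _ = max 1 ‖α - 1‖ * (‖x‖ * ‖y‖) + ‖⟪x, y⟫_𝕜‖ := by ring

theorem norm_prod_inner_le {z : E} (hz : ‖z‖ = 1) {n : ℕ} (hn : 2 ≤ n) (x : ℕ → E) {α : 𝕜}
    (hα : α ≠ 0) :
    ‖∏ i ∈ Icc 1 n, ⟪x i, z⟫_𝕜‖ ≤ 1 / ‖α‖ * (max 1 ‖α - 1‖ * ∏ i ∈ Icc 1 n, ‖x i‖ +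
      ‖⟪x 1, x 2⟫_𝕜 * ∏ i ∈ Icc 3 n, ⟪x i, z⟫_𝕜‖) := by
  set P := ∏ i ∈ Icc 3 n, ⟪x i, z⟫_𝕜
  set M := max 1 ‖α - 1‖
  have hP : ‖P‖ ≤ ∏ i ∈ Icc 3 n, ‖x i‖ := by
    rw [norm_prod]
    gcongr with i
    simpa [hz] using norm_inner_le_norm (x i) z
  rw [prod_Icc_one_eq_mul_mul_prod_Icc_three _ hn, prod_Icc_one_eq_mul_mul_prod_Icc_three _ hn,
    one_div_mul_eq_div, le_div_iff₀' (norm_pos_iff.mpr hα)]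
  calc ‖α‖ * ‖⟪x 1, z⟫_𝕜 * (⟪x 2, z⟫_𝕜 * P)‖ = ‖α * ⟪x 1, z⟫_𝕜 * ⟪z, x 2⟫_𝕜‖ * ‖P‖ := by
        simp only [norm_mul, norm_inner_symm z]
        ring
    _ ≤ (M * (‖x 1‖ * ‖x 2‖) + ‖⟪x 1, x 2⟫_𝕜‖) * ‖P‖ := by
        gcongr
        exact norm_mul_inner_mul_inner_le hz α _ _
    _ ≤ M * (‖x 1‖ * (‖x 2‖ * ∏ i ∈ Icc 3 n, ‖x i‖)) + ‖⟪x 1, x 2⟫_𝕜 * P‖ := by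
        rw [add_mul, norm_mul, mul_assoc, mul_assoc]
        gcongr

end InnerProductSpace

namespace CStarModuleRight

section Algebra

variable {A X : Type*} [NonUnitalSemiring A] [StarRing A] [Module ℂ A] [PartialOrder A] [Norm A]
  [AddCommGroup X] [Module ℂ X] [SMul Aᵐᵒᵖ X] [Norm X] [CStarModuleRight A X]

lemma inner_add_left (x y z : X) : inner A (x + y) z = inner A x z + inner A y z := by
  rw [← star_inner z, inner_add_right, star_add, star_inner, star_inner]

lemma inner_smul_left_complex [StarModule ℂ A] (c : ℂ) (x y : X) :
    inner A (c • x) y = star c • inner A x y := by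
  rw [← star_inner y, inner_smul_right_complex, star_smul, star_inner]

end Algebra

variable {A X : Type*} [NonUnitalCStarAlgebra A] [PartialOrder A] [StarOrderedRing A]
  [AddCommGroup X] [Module ℂ X] [SMul Aᵐᵒᵖ X] [Norm X] [CStarModuleRight A X]

/-- `X` with the `ℂ`-valued semi-inner product `f ⟨x, y⟩`. -/
def WithFunctional (_f : A →ₚ[ℂ] ℂ) (X : Type*) := X

variable (f : A →ₚ[ℂ] ℂ)

instance : AddCommGroup (WithFunctional f X) := inferInstanceAs (AddCommGroup X)
instance : Module ℂ (WithFunctional f X) := inferInstanceAs (Module ℂ X)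

def toWithFunctional : X ≃ₗ[ℂ] WithFunctional f X := LinearEquiv.refl ℂ X

noncomputable instance : PreInnerProductSpace.Core ℂ (WithFunctional f X) where
  inner x y := f (inner A ((toWithFunctional f).symm x) ((toWithFunctional f).symm y))
  conj_inner_symm x y := by simp [← Complex.star_def, ← map_star f, star_inner]
  re_inner_nonneg x := (RCLike.nonneg_iff.mp (f.map_nonneg inner_self_nonneg)).1
  add_left x y z := by simp [inner_add_left]
  smul_left x y r := by simp [inner_smul_left_complex]

noncomputable instance : SeminormedAddCommGroup (WithFunctional f X) :=
  InnerProductSpace.Core.toSeminormedAddCommGroup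
    (c := (inferInstance : PreInnerProductSpace.Core ℂ (WithFunctional f X)))

noncomputable instance : InnerProductSpace ℂ (WithFunctional f X) :=
  InnerProductSpace.ofCore (inferInstance : PreInnerProductSpace.Core ℂ (WithFunctional f X))

end CStarModuleRight

/-- Corollary 2.2, inequality (2.1): a Buzano-type inequality in
pre-Hilbert `C*`-modules, for an arbitrary nonzero `α`. -/
theorem buzano_corollary_alpha
    {A X : Type*} [NonUnitalCStarAlgebra A] [PartialOrder A] [StarOrderedRing A]
    [AddCommGroup X] [Module ℂ X] [SMul Aᵐᵒᵖ X] [Norm X] [CStarModuleRight A X]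
    (φ : A →ₗ[ℂ] ℂ) (hφ : ∀ b : A, 0 ≤ b → 0 ≤ φ b)
    (n : ℕ) (hn : 2 ≤ n) (x : ℕ → X) (z : X)
    (hz : φ (inner A z z : A) = 1)
    (α : ℂ) (hα : α ≠ 0) :
    ‖∏ i ∈ Finset.Icc 1 n, φ (inner A (x i) z : A)‖ ≤
      (1 / ‖α‖) *
        (max 1 ‖α - 1‖ *
            ∏ i ∈ Finset.Icc 1 n, Real.sqrt (φ (inner A (x i) (x i) : A)).re
          + ‖φ (inner A (x 1) (x 2) : A) *
              ∏ i ∈ Finset.Icc 3 n, φ (inner A (x i) z : A)‖) := by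
  let f := PositiveLinearMap.mk₀ φ hφ
  have hz' : ‖CStarModuleRight.toWithFunctional f z‖ = 1 := by
    change √(φ (inner A z z)).re = 1
    simp [hz]
  -- the inner product and norm of `WithFunctional f X` unfold to `φ ⟨x, y⟩` and `√(re φ ⟨x, x⟩)`
  exact norm_prod_inner_le hz' hn (fun i ↦ CStarModuleRight.toWithFunctional f (x i)) hα
end

section
/- Let A be a unital C*-algebra and a ∈ A. Then for every integer n ≥ 2: v(a)ⁿ ≤ (1/(2^{n−1} − 1))·Σ_{i=1}^{n−1} 2^{n−i−1}·‖a‖^{n−i}·‖aⁱ‖. -/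
open scoped ComplexOrder

/-- A state on a unital `C*`-algebra: a positive linear functional `φ` (equivalently, since the
algebra is complete, `φ (star b * b) ≥ 0` for all `b`) with `φ 1 = 1`. -/
def IsState {A : Type*} [CStarAlgebra A] (φ : A →ₗ[ℂ] ℂ) : Prop :=
  (∀ b : A, 0 ≤ φ (star b * b)) ∧ φ 1 = 1

/-- The numerical radius of an element of a unital `C*`-algebra:
`v(a) = sup { |φ(a)| : φ a state on A }`. -/
noncomputable def numRadius {A : Type*} [CStarAlgebra A] (a : A) : ℝ :=
  sSup {r : ℝ | ∃ φ : A →ₗ[ℂ] ℂ, IsState φ ∧ r = ‖φ a‖}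

/-!
Fix a state `φ` and put `p = ‖φ a‖`. Through the GNS construction `φ (star x * y)` is an inner
product in which `1` is a unit vector, so Buzano's inequality gives
`2 ‖φ x‖ ‖φ y‖ ≤ ‖x‖ ‖y‖ + ‖φ (x * y)‖`. With `x = a`, `y = a ^ k` this reads
`2 p ‖φ (a ^ k)‖ ≤ ‖a‖ ‖a ^ k‖ + ‖φ (a ^ (k + 1))‖`, and telescoping gives
`2 ^ (n - 1) pⁿ ≤ Sₙ + ‖φ (a ^ n)‖`, where `Sₙ` is the sum in the statement. As
`Sₙ₊₁ = 2 ‖a‖ Sₙ + ‖a‖ ‖a ^ n‖`, a second induction gives `(2 ^ (n - 1) - 1) pⁿ ≤ Sₙ`; then take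
the supremum over all states.
-/

open scoped InnerProductSpace
open Finset

section
variable {𝕜 E : Type*} [RCLike 𝕜] [SeminormedAddCommGroup E] [InnerProductSpace 𝕜 E]

theorem inner_sub_inner_smul_sub_inner_smul {e : E} (he : ‖e‖ = 1) (x y : E) :
    ⟪x - ⟪e, x⟫_𝕜 • e, y - ⟪e, y⟫_𝕜 • e⟫_𝕜 = ⟪x, y⟫_𝕜 - ⟪x, e⟫_𝕜 * ⟪e, y⟫_𝕜 := by
  simp only [inner_sub_left, inner_sub_right, inner_smul_left, inner_smul_right,
    inner_conj_symm, inner_self_eq_norm_sq_to_K, he, RCLike.ofReal_one, one_pow]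
  ring

/-- Buzano's inequality for a unit vector `e`: Cauchy–Schwarz for the components of `x` and `y`
orthogonal to `e`. -/
theorem two_mul_norm_inner_mul_norm_inner_le {e : E} (he : ‖e‖ = 1) (x y : E) :
    2 * ‖⟪x, e⟫_𝕜‖ * ‖⟪e, y⟫_𝕜‖ ≤ ‖x‖ * ‖y‖ + ‖⟪x, y⟫_𝕜‖ := by
  have hsq (z : E) : ‖z - ⟪e, z⟫_𝕜 • e‖ ^ 2 = ‖z‖ ^ 2 - ‖⟪e, z⟫_𝕜‖ ^ 2 := by
    have h := congrArg RCLike.re (inner_sub_inner_smul_sub_inner_smul (𝕜 := 𝕜) he z z)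
    rw [← inner_conj_symm z e, RCLike.conj_mul, inner_self_eq_norm_sq_to_K,
      inner_self_eq_norm_sq_to_K] at h
    exact_mod_cast h
  have hcs := norm_inner_le_norm (𝕜 := 𝕜) (x - ⟪e, x⟫_𝕜 • e) (y - ⟪e, y⟫_𝕜 • e)
  rw [inner_sub_inner_smul_sub_inner_smul he] at hcs
  have hx : ‖⟪e, x⟫_𝕜‖ ≤ ‖x‖ := by simpa [he] using norm_inner_le_norm (𝕜 := 𝕜) e x
  have hy : ‖⟪e, y⟫_𝕜‖ ≤ ‖y‖ := by simpa [he] using norm_inner_le_norm (𝕜 := 𝕜) e y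
  have hproj : ‖x - ⟪e, x⟫_𝕜 • e‖ * ‖y - ⟪e, y⟫_𝕜 • e‖ ≤
      ‖x‖ * ‖y‖ - ‖⟪e, x⟫_𝕜‖ * ‖⟪e, y⟫_𝕜‖ := by
    refine abs_le_of_sq_le_sq' ?_ ?_ |>.2
    · rw [mul_pow, hsq, hsq]
      nlinarith [sq_nonneg (‖x‖ * ‖⟪e, y⟫_𝕜‖ - ‖⟪e, x⟫_𝕜‖ * ‖y‖)]
    · nlinarith [norm_nonneg ⟪e, x⟫_𝕜, norm_nonneg ⟪e, y⟫_𝕜]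
  have htri := norm_sub_norm_le (⟪x, e⟫_𝕜 * ⟪e, y⟫_𝕜) ⟪x, y⟫_𝕜
  rw [norm_mul, norm_sub_rev] at htri
  rw [norm_inner_symm x e] at htri ⊢
  linarith
end

namespace IsState

variable {A : Type*} [CStarAlgebra A] {φ : A →ₗ[ℂ] ℂ}

attribute [local instance] CStarAlgebra.spectralOrder CStarAlgebra.spectralOrderedRing

noncomputable def toPositiveLinearMap (hφ : IsState φ) : A →ₚ[ℂ] ℂ :=
  .mk₀ φ fun x hx ↦ by
    obtain ⟨b, rfl⟩ := CStarAlgebra.nonneg_iff_eq_star_mul_self.mp hx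
    exact hφ.1 b

@[simp]
lemma toPositiveLinearMap_apply (hφ : IsState φ) (x : A) : hφ.toPositiveLinearMap x = φ x := rfl

open PositiveLinearMap

lemma inner_toPreGNS (hφ : IsState φ) (x y : A) :
    ⟪hφ.toPositiveLinearMap.toPreGNS x, hφ.toPositiveLinearMap.toPreGNS y⟫_ℂ = φ (star x * y) :=
  rfl

lemma norm_toPreGNS_one (hφ : IsState φ) : ‖hφ.toPositiveLinearMap.toPreGNS 1‖ = 1 := by
  have h := hφ.toPositiveLinearMap.preGNS_norm_sq (hφ.toPositiveLinearMap.toPreGNS 1)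
  rw [ofPreGNS_toPreGNS, star_one, mul_one, toPositiveLinearMap_apply, hφ.2] at h
  exact (pow_eq_one_iff_of_nonneg (norm_nonneg _) two_ne_zero).mp (mod_cast h)

lemma norm_toPreGNS_le (hφ : IsState φ) (x : A) : ‖hφ.toPositiveLinearMap.toPreGNS x‖ ≤ ‖x‖ := by
  -- `toPreGNS x` is the image of the unit vector `toPreGNS 1` under left multiplication by `x`
  have := (hφ.toPositiveLinearMap.leftMulMapPreGNS x).le_of_opNorm_le
    (LinearMap.mkContinuous_norm_le _ (norm_nonneg x) _) (hφ.toPositiveLinearMap.toPreGNS 1)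
  simpa [hφ.norm_toPreGNS_one] using this

lemma norm_apply_le (hφ : IsState φ) (x : A) : ‖φ x‖ ≤ ‖x‖ := by
  have h := norm_inner_le_norm (𝕜 := ℂ) (hφ.toPositiveLinearMap.toPreGNS 1)
    (hφ.toPositiveLinearMap.toPreGNS x)
  rw [inner_toPreGNS, star_one, one_mul, hφ.norm_toPreGNS_one, one_mul] at h
  exact h.trans (hφ.norm_toPreGNS_le x)

lemma two_mul_norm_apply_mul_norm_apply_le (hφ : IsState φ) (x y : A) :
    2 * ‖φ x‖ * ‖φ y‖ ≤ ‖x‖ * ‖y‖ + ‖φ (x * y)‖ := by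
  have h := two_mul_norm_inner_mul_norm_inner_le (𝕜 := ℂ) hφ.norm_toPreGNS_one
    (hφ.toPositiveLinearMap.toPreGNS (star x)) (hφ.toPositiveLinearMap.toPreGNS y)
  rw [inner_toPreGNS, inner_toPreGNS, inner_toPreGNS, star_star, star_one, mul_one, one_mul] at h
  calc 2 * ‖φ x‖ * ‖φ y‖ ≤ _ := h
    _ ≤ ‖x‖ * ‖y‖ + ‖φ (x * y)‖ := by
      gcongr
      · exact norm_star x ▸ hφ.norm_toPreGNS_le (star x)
      · exact hφ.norm_toPreGNS_le y

end IsState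

noncomputable def weightedPowSum (r : ℝ) (N : ℕ → ℝ) (n : ℕ) : ℝ :=
  ∑ i ∈ Icc 1 (n - 1), 2 ^ (n - i - 1) * r ^ (n - i) * N i

namespace weightedPowSum

variable {r : ℝ} {N : ℕ → ℝ}

lemma nonneg (hN : ∀ k ≥ 1, 0 ≤ N k) (hr : 0 ≤ r) (n : ℕ) : 0 ≤ weightedPowSum r N n :=
  sum_nonneg fun i hi ↦ mul_nonneg (by positivity) (hN i (mem_Icc.mp hi).1)

lemma one : weightedPowSum r N 1 = 0 := by simp [weightedPowSum]

lemma succ {n : ℕ} (hn : 1 ≤ n) :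
    weightedPowSum r N (n + 1) = 2 * r * weightedPowSum r N n + r * N n := by
  obtain ⟨m, rfl⟩ := Nat.exists_eq_add_of_le' hn
  rw [weightedPowSum, weightedPowSum, Nat.add_sub_cancel, sum_Icc_succ_top (by omega), mul_sum]
  congr 1
  · refine sum_congr rfl fun i hi ↦ ?_
    obtain ⟨-, him⟩ := mem_Icc.mp hi
    rw [show m + 1 + 1 - i - 1 = (m + 1 - i - 1) + 1 by omega,
      show m + 1 + 1 - i = (m + 1 - i) + 1 by omega]
    ring
  · simp

end weightedPowSum

section

variable {w N : ℕ → ℝ} {r : ℝ}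

theorem two_pow_mul_pow_le_weightedPowSum_add (hw : ∀ k, 0 ≤ w k) (hw1 : w 1 ≤ r)
    (hwN : ∀ k ≥ 1, w k ≤ N k) (hstep : ∀ k ≥ 1, 2 * w 1 * w k ≤ r * N k + w (k + 1))
    {n : ℕ} (hn : 1 ≤ n) : 2 ^ (n - 1) * w 1 ^ n ≤ weightedPowSum r N n + w n := by
  induction n, hn using Nat.le_induction with
  | base => simp [weightedPowSum.one]
  | succ n hn ih =>
    have hS := weightedPowSum.nonneg (fun k hk ↦ (hw k).trans (hwN k hk)) ((hw 1).trans hw1) n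
    calc (2 : ℝ) ^ (n + 1 - 1) * w 1 ^ (n + 1) = 2 * w 1 * (2 ^ (n - 1) * w 1 ^ n) := by
          rw [Nat.add_sub_cancel, ← pow_sub_one_mul (by omega : n ≠ 0), pow_succ]; ring
      _ ≤ 2 * w 1 * (weightedPowSum r N n + w n) := by
          gcongr; exact mul_nonneg zero_le_two (hw 1)
      _ ≤ 2 * r * weightedPowSum r N n + (r * N n + w (n + 1)) := by
          rw [mul_add]; gcongr; exact hstep n hn
      _ = weightedPowSum r N (n + 1) + w (n + 1) := by rw [weightedPowSum.succ hn]; ring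

theorem two_pow_sub_one_mul_pow_le_weightedPowSum (hw : ∀ k, 0 ≤ w k) (hw1 : w 1 ≤ r)
    (hwN : ∀ k ≥ 1, w k ≤ N k) (hstep : ∀ k ≥ 1, 2 * w 1 * w k ≤ r * N k + w (k + 1))
    {n : ℕ} (hn : 1 ≤ n) : (2 ^ (n - 1) - 1) * w 1 ^ n ≤ weightedPowSum r N n := by
  induction n, hn using Nat.le_induction with
  | base => simp [weightedPowSum.one]
  | succ n hn ih =>
    have hS := weightedPowSum.nonneg (fun k hk ↦ (hw k).trans (hwN k hk)) ((hw 1).trans hw1) n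
    have hW := two_pow_mul_pow_le_weightedPowSum_add hw hw1 hwN hstep hn
    have hwn : w 1 * w n ≤ r * N n := mul_le_mul hw1 (hwN n hn) (hw n) ((hw 1).trans hw1)
    calc ((2 : ℝ) ^ (n + 1 - 1) - 1) * w 1 ^ (n + 1)
        = w 1 * (2 ^ (n - 1) * w 1 ^ n) + w 1 * ((2 ^ (n - 1) - 1) * w 1 ^ n) := by
          rw [Nat.add_sub_cancel, ← pow_sub_one_mul (by omega : n ≠ 0), pow_succ]; ring
      _ ≤ w 1 * (weightedPowSum r N n + w n) + w 1 * weightedPowSum r N n := by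
          gcongr <;> exact hw 1
      _ ≤ 2 * r * weightedPowSum r N n + r * N n := by nlinarith
      _ = weightedPowSum r N (n + 1) := (weightedPowSum.succ hn).symm

end

theorem Real.sSup_pow_le {S : Set ℝ} {C : ℝ} {n : ℕ} (hn : n ≠ 0) (hC : 0 ≤ C)
    (hS : ∀ x ∈ S, 0 ≤ x ∧ x ^ n ≤ C) : sSup S ^ n ≤ C := by
  have hle : sSup S ≤ C ^ (n⁻¹ : ℝ) := by
    refine Real.sSup_le (fun x hx ↦ ?_) (by positivity)
    obtain ⟨hx0, hxC⟩ := hS x hx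
    calc x = (x ^ n) ^ (n⁻¹ : ℝ) := (Real.pow_rpow_inv_natCast hx0 hn).symm
      _ ≤ C ^ (n⁻¹ : ℝ) := by gcongr
  calc sSup S ^ n ≤ (C ^ (n⁻¹ : ℝ)) ^ n :=
        pow_le_pow_left₀ (Real.sSup_nonneg fun x hx ↦ (hS x hx).1) hle n
    _ = C := Real.rpow_inv_natCast_pow hC hn

/-- Corollary 2.7: for every integer `n ≥ 2`,
`v(a)ⁿ ≤ (1/(2^{n−1} − 1))·Σ_{i=1}^{n−1} 2^{n−i−1}·‖a‖^{n−i}·‖aⁱ‖`. -/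
theorem numRadius_pow_le'
    {A : Type*} [CStarAlgebra A] (a : A) (n : ℕ) (hn : 2 ≤ n) :
    numRadius a ^ n ≤
      (1 / ((2 : ℝ) ^ (n - 1) - 1)) *
        ∑ i ∈ Finset.Icc 1 (n - 1), (2 : ℝ) ^ (n - i - 1) * ‖a‖ ^ (n - i) * ‖a ^ i‖ := by
  have hpos : 0 < (2 : ℝ) ^ (n - 1) - 1 := sub_pos.mpr (one_lt_pow₀ one_lt_two (by omega))
  refine Real.sSup_pow_le (by omega) ?_ ?_
  · exact mul_nonneg (by positivity)
      (weightedPowSum.nonneg (fun _ _ ↦ norm_nonneg _) (norm_nonneg a) n)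
  rintro _ ⟨φ, hφ, rfl⟩
  refine ⟨norm_nonneg _, ?_⟩
  rw [one_div, inv_mul_eq_div, le_div_iff₀ hpos, mul_comm]
  have key := two_pow_sub_one_mul_pow_le_weightedPowSum (w := fun k ↦ ‖φ (a ^ k)‖)
    (N := fun k ↦ ‖a ^ k‖) (r := ‖a‖) (fun _ ↦ norm_nonneg _)
    (by simpa using hφ.norm_apply_le a) (fun k _ ↦ hφ.norm_apply_le (a ^ k))
    (fun k _ ↦ by simpa [pow_succ'] using hφ.two_mul_norm_apply_mul_norm_apply_le a (a ^ k))
    (by omega : 1 ≤ n)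
  simp only [pow_one] at key
  exact key
end

section
/- Let A be a unital C*-algebra and a ∈ A. Then v(a)³ ≤ (1/2)·‖a*a + aa*‖·‖a‖. -/
open scoped ComplexOrder

/-!
For a state `φ`, the Cauchy–Schwarz inequality of the GNS inner product `⟪x, y⟫ = φ (x⋆ y)`
gives `|φ a|² ≤ φ (a⋆ a)`, and also `|φ a|² = |φ a⋆|² ≤ φ (a a⋆)`. Adding the two,
`2 |φ a|² ≤ φ (a⋆ a + a a⋆) ≤ ‖a⋆ a + a a⋆‖`; and `|φ a|² ≤ ‖a⋆ a‖ = ‖a‖²`. Hence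
`v(a)² ≤ ½ ‖a⋆ a + a a⋆‖` and `v(a) ≤ ‖a‖`, and the claim is their product.
-/

namespace PositiveLinearMap

section NonUnital

variable {A : Type*} [NonUnitalCStarAlgebra A] [PartialOrder A] [StarOrderedRing A]

lemma norm_apply_star_mul_sq_le (f : A →ₚ[ℂ] ℂ) (a b : A) :
    ‖f (star a * b)‖ ^ 2 ≤ (f (star a * a)).re * (f (star b * b)).re := by
  have hnorm (x : A) : ‖f.toPreGNS x‖ ^ 2 = (f (star x * x)).re := by
    exact_mod_cast congrArg Complex.re (f.preGNS_norm_sq (f.toPreGNS x))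
  rw [← hnorm, ← hnorm, ← mul_pow]
  exact pow_le_pow_left₀ (norm_nonneg _)
    (norm_inner_le_norm (𝕜 := ℂ) (f.toPreGNS a) (f.toPreGNS b)) 2

end NonUnital

variable {A : Type*} [CStarAlgebra A] [PartialOrder A] [StarOrderedRing A]
  (f : A →ₚ[ℂ] ℂ)

lemma norm_apply_sq_le_of_map_one (hf : f 1 = 1) (b : A) : ‖f b‖ ^ 2 ≤ (f (star b * b)).re := by
  simpa [hf] using f.norm_apply_star_mul_sq_le 1 b

lemma re_apply_le_norm_of_map_one (hf : f 1 = 1) {x : A} (hx : 0 ≤ x) : (f x).re ≤ ‖x‖ :=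
  (Complex.re_le_norm _).trans <| by simpa [hf] using f.norm_apply_le_of_nonneg x hx

lemma norm_apply_le_of_map_one (hf : f 1 = 1) (a : A) : ‖f a‖ ≤ ‖a‖ := by
  have h := (f.norm_apply_sq_le_of_map_one hf a).trans
    (f.re_apply_le_norm_of_map_one hf (star_mul_self_nonneg a))
  rw [CStarRing.norm_star_mul_self, ← sq] at h
  exact le_of_sq_le_sq h (norm_nonneg a)

lemma norm_apply_sq_le_half_norm_star_mul_self_add_mul_star_self (hf : f 1 = 1) (a : A) :
    ‖f a‖ ^ 2 ≤ 1 / 2 * ‖star a * a + a * star a‖ := by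
  have h₁ := f.norm_apply_sq_le_of_map_one hf a
  have h₂ := f.norm_apply_sq_le_of_map_one hf (star a)
  have h := f.re_apply_le_norm_of_map_one hf
    (add_nonneg (star_mul_self_nonneg a) (mul_star_self_nonneg a))
  rw [star_star, map_star, Complex.star_def, Complex.norm_conj] at h₂
  rw [map_add, Complex.add_re] at h
  linarith

end PositiveLinearMap

section State

variable {A : Type*} [CStarAlgebra A]

noncomputable def IsState.toPositiveLinearMap_s13 [PartialOrder A] [StarOrderedRing A]
    {φ : A →ₗ[ℂ] ℂ} (hφ : IsState φ) : A →ₚ[ℂ] ℂ :=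
  .mk₀ φ fun _ hx ↦ by
    obtain ⟨b, rfl⟩ := CStarAlgebra.nonneg_iff_eq_star_mul_self.mp hx
    exact hφ.1 b

lemma numRadius_nonneg (a : A) : 0 ≤ numRadius a :=
  Real.sSup_nonneg <| by rintro r ⟨φ, -, rfl⟩; positivity

lemma numRadius_le_of_forall_isState {a : A} {c : ℝ} (hc : 0 ≤ c)
    (h : ∀ φ, IsState φ → ‖φ a‖ ≤ c) : numRadius a ≤ c :=
  Real.sSup_le (by rintro r ⟨φ, hφ, rfl⟩; exact h φ hφ) hc

lemma numRadius_le_norm (a : A) : numRadius a ≤ ‖a‖ := by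
  let := CStarAlgebra.spectralOrder A
  have := CStarAlgebra.spectralOrderedRing A
  exact numRadius_le_of_forall_isState (norm_nonneg a) fun φ hφ ↦
    hφ.toPositiveLinearMap_s13.norm_apply_le_of_map_one hφ.2 a

lemma numRadius_sq_le_half_norm_star_mul_self_add_mul_star_self (a : A) :
    numRadius a ^ 2 ≤ 1 / 2 * ‖star a * a + a * star a‖ := by
  let := CStarAlgebra.spectralOrder A
  have := CStarAlgebra.spectralOrderedRing A
  refine (Real.le_sqrt (numRadius_nonneg a) (by positivity)).mp <|
    numRadius_le_of_forall_isState (Real.sqrt_nonneg _) fun φ hφ ↦ Real.le_sqrt_of_sq_le ?_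
  exact hφ.toPositiveLinearMap_s13.norm_apply_sq_le_half_norm_star_mul_self_add_mul_star_self hφ.2 a
end State

/-- Corollary 2.12: `v(a)³ ≤ (1/2)·‖a*a + aa*‖·‖a‖`. -/
theorem numRadius_cube_le_half
    {A : Type*} [CStarAlgebra A] (a : A) :
    numRadius a ^ 3 ≤ (1 / 2) * ‖star a * a + a * star a‖ * ‖a‖ :=
  calc numRadius a ^ 3 = numRadius a ^ 2 * numRadius a := pow_succ _ 2
    _ ≤ (1 / 2) * ‖star a * a + a * star a‖ * ‖a‖ :=
      mul_le_mul (numRadius_sq_le_half_norm_star_mul_self_add_mul_star_self a)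
        (numRadius_le_norm a) (numRadius_nonneg a) (by positivity)
end
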